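/- arXiv:2405.11664 — 6 statements merged into one kernel-verified Lean document; each statement's English description precedes it below -/
import Mathlib

section
/- Let A, B be bounded operators on a Hilbert space H with ‖A‖ ≤ 1, B selfadjoint with -1 ≤ B ≤ 1, and ker(1+B) = {0}. If μ is a complex number with |μ| = 1 and φ ∈ H satisfies A B φ = μ φ, then A φ = μ φ and B φ = φ. -/
open ContinuousLinearMap
open scoped InnerProductSpace

/-!
Since `‖A‖ ≤ 1` and `|μ| = 1`, `‖φ‖ ≤ ‖B φ‖`, so the quadratic form of `1 - B² = (1 + B)(1 - B)`
is `≤ 0` at `φ`. As a product of commuting positive operators, `1 - B²` is positive, hence it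
annihilates `φ`; injectivity of `1 + B` then gives `(1 - B) φ = 0`.
-/

namespace ContinuousLinearMap

variable {H : Type*} [NormedAddCommGroup H] [InnerProductSpace ℂ H] [CompleteSpace H]

-- Writing `T = S† S`, the quadratic form of `T` at `x` is `‖S x‖²`.
theorem IsPositive.apply_eq_zero_of_re_inner_eq_zero {T : H →L[ℂ] H} (hT : T.IsPositive) {x : H}
    (hx : RCLike.re ⟪T x, x⟫_ℂ = 0) : T x = 0 := by
  obtain ⟨S, rfl⟩ := CStarAlgebra.nonneg_iff_eq_star_mul_self.mp ((nonneg_iff_isPositive T).mpr hT)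
  have hSx : S x = 0 := by
    rw [star_eq_adjoint, mul_apply_eq_comp, adjoint_inner_left, ← @norm_sq_eq_re_inner ℂ] at hx
    exact norm_eq_zero.mp (pow_eq_zero_iff two_ne_zero |>.mp hx)
  rw [mul_apply_eq_comp, hSx, map_zero]

theorem isPositive_one_add_mul_one_sub {B : H →L[ℂ] H} (hB₁ : (1 + B).IsPositive)
    (hB₂ : (1 - B).IsPositive) : ((1 + B) * (1 - B)).IsPositive := by
  rw [← nonneg_iff_isPositive] at hB₁ hB₂ ⊢
  exact Commute.mul_nonneg hB₁ hB₂ (((Commute.one_right 1).sub_right (Commute.one_left B)).add_left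
    ((Commute.one_right B).sub_right (Commute.refl B)))

theorem re_inner_one_add_mul_one_sub_apply {B : H →L[ℂ] H} (hB : IsSelfAdjoint B) (x : H) :
    RCLike.re ⟪((1 + B) * (1 - B)) x, x⟫_ℂ = ‖x‖ ^ 2 - ‖B x‖ ^ 2 := by
  have hBB : ⟪B (B x), x⟫_ℂ = ⟪B x, B x⟫_ℂ := hB.isSymmetric (B x) x
  simp only [mul_apply_eq_comp, add_apply, sub_apply, one_apply_eq_self, map_sub, inner_add_left,
    inner_sub_left, hBB, map_add, @norm_sq_eq_re_inner ℂ]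
  ring

end ContinuousLinearMap

theorem stmt0 {H : Type*} [NormedAddCommGroup H] [InnerProductSpace ℂ H] [CompleteSpace H]
    (A B : H →L[ℂ] H) (hA : ‖A‖ ≤ 1) (hB : IsSelfAdjoint B)
    (hB1 : (1 + B).IsPositive) (hB2 : (1 - B).IsPositive)
    (hker : LinearMap.ker ((1 + B : H →L[ℂ] H) : H →ₗ[ℂ] H) = ⊥)
    (μ : ℂ) (hμ : ‖μ‖ = 1) (φ : H) (h : A (B φ) = μ • φ) :
    A φ = μ • φ ∧ B φ = φ := by
  have hnorm : ‖φ‖ ≤ ‖B φ‖ := by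
    calc ‖φ‖ = ‖A (B φ)‖ := by rw [h, norm_smul, hμ, one_mul]
      _ ≤ ‖A‖ * ‖B φ‖ := A.le_opNorm (B φ)
      _ ≤ ‖B φ‖ := mul_le_of_le_one_left (norm_nonneg _) hA
  have hpos := isPositive_one_add_mul_one_sub hB1 hB2
  have hform : RCLike.re ⟪((1 + B) * (1 - B)) φ, φ⟫_ℂ = 0 := by
    have hquad := re_inner_one_add_mul_one_sub_apply hB φ
    have hnonneg := hpos.re_inner_nonneg_left φ
    nlinarith [norm_nonneg φ]
  have hfix : (1 - B) φ = 0 := by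
    rw [← Submodule.mem_bot ℂ, ← hker, LinearMap.mem_ker]
    exact hpos.apply_eq_zero_of_re_inner_eq_zero hform
  have hBφ : B φ = φ := by
    rw [sub_apply, one_apply_eq_self, sub_eq_zero] at hfix
    exact hfix.symm
  exact ⟨by rwa [hBφ] at h, hBφ⟩
end

section
/- Let A, B be bounded operators on a Hilbert space H with ‖A‖ ≤ 1, B selfadjoint with -1 ≤ B ≤ 1, μ ∈ ℂ with |μ| = 1, and φ ∈ H with A B φ = μ φ and ‖φ‖ = 1. Then ⟨Bφ, (1 - A*A) Bφ⟩ + ⟨φ, (1 - B²) φ⟩ = 0 and consequently √(1 - B²) φ = 0. -/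
open ContinuousLinearMap
open scoped InnerProductSpace

/-!
Both inner products are differences of squared norms, `‖Bφ‖² - ‖ABφ‖²` and `‖φ‖² - ‖Bφ‖²`,
so their sum is `‖φ‖² - ‖ABφ‖² = 0` because `|μ| = 1`. A square root `S` of `1 - B²`
satisfies `‖Sφ‖² = ‖φ‖² - ‖Bφ‖²`, which is `≤ 0` since `‖φ‖ = ‖ABφ‖ ≤ ‖Bφ‖` for a contraction `A`.
-/

section

variable {𝕜 E : Type*} [RCLike 𝕜] [NormedAddCommGroup E] [InnerProductSpace 𝕜 E] [CompleteSpace E]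

theorem inner_one_sub_adjoint_comp_self_apply (T : E →L[𝕜] E) (x : E) :
    ⟪x, (1 - adjoint T ∘L T) x⟫_𝕜 = ((‖x‖ ^ 2 - ‖T x‖ ^ 2 : ℝ) : 𝕜) := by
  rw [sub_apply, one_apply_eq_self, comp_apply, inner_sub_right, adjoint_inner_right,
    inner_self_eq_norm_sq_to_K, inner_self_eq_norm_sq_to_K]
  push_cast
  rfl

theorem IsSelfAdjoint.inner_one_sub_comp_self_apply {B : E →L[𝕜] E} (hB : IsSelfAdjoint B)
    (x : E) : ⟪x, (1 - B ∘L B) x⟫_𝕜 = ((‖x‖ ^ 2 - ‖B x‖ ^ 2 : ℝ) : 𝕜) := by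
  simpa only [hB.adjoint_eq] using inner_one_sub_adjoint_comp_self_apply B x

theorem IsSelfAdjoint.apply_eq_zero_of_comp_self_eq_one_sub {B S : E →L[𝕜] E}
    (hB : IsSelfAdjoint B) (hS : IsSelfAdjoint S) (hSS : S ∘L S = 1 - B ∘L B) {x : E}
    (hx : ‖x‖ ≤ ‖B x‖) : S x = 0 := by
  have hSx : ‖S x‖ ^ 2 = ‖x‖ ^ 2 - ‖B x‖ ^ 2 := by
    rw [apply_norm_sq_eq_inner_adjoint_right, hS.adjoint_eq, hSS,
      hB.inner_one_sub_comp_self_apply, RCLike.ofReal_re]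
  have hSx0 : ‖S x‖ ^ 2 = 0 := le_antisymm (by nlinarith [norm_nonneg x]) (sq_nonneg _)
  exact norm_eq_zero.mp (pow_eq_zero_iff two_ne_zero |>.mp hSx0)

end

theorem stmt1_general {H : Type*} [NormedAddCommGroup H] [InnerProductSpace ℂ H] [CompleteSpace H]
    (A B : H →L[ℂ] H) (hA : ‖A‖ ≤ 1) (hB : IsSelfAdjoint B)
    (μ : ℂ) (hμ : ‖μ‖ = 1) (φ : H) (h : A (B φ) = μ • φ) :
    ⟪B φ, ((1 : H →L[ℂ] H) - adjoint A ∘L A) (B φ)⟫_ℂ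
      + ⟪φ, ((1 : H →L[ℂ] H) - B ∘L B) φ⟫_ℂ = 0
    ∧ ∀ S : H →L[ℂ] H, S.IsPositive → S ∘L S = 1 - B ∘L B → S φ = 0 := by
  have hABφ : ‖A (B φ)‖ = ‖φ‖ := by rw [h, norm_smul, hμ, one_mul]
  refine ⟨?_, fun S hS hSS => hB.apply_eq_zero_of_comp_self_eq_one_sub hS.isSelfAdjoint hSS ?_⟩
  · rw [inner_one_sub_adjoint_comp_self_apply, hB.inner_one_sub_comp_self_apply, hABφ]
    push_cast
    ring
  · simpa [hABφ] using A.le_of_opNorm_le hA (B φ)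

theorem stmt1 {H : Type*} [NormedAddCommGroup H] [InnerProductSpace ℂ H] [CompleteSpace H]
    (A B : H →L[ℂ] H) (hA : ‖A‖ ≤ 1) (hB : IsSelfAdjoint B)
    (hB1 : (1 + B).IsPositive) (hB2 : (1 - B).IsPositive)
    (μ : ℂ) (hμ : ‖μ‖ = 1) (φ : H) (hφ : ‖φ‖ = 1) (h : A (B φ) = μ • φ) :
    ⟪B φ, ((1 : H →L[ℂ] H) - adjoint A ∘L A) (B φ)⟫_ℂ
      + ⟪φ, ((1 : H →L[ℂ] H) - B ∘L B) φ⟫_ℂ = 0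
    ∧ ∀ S : H →L[ℂ] H, S.IsPositive → S ∘L S = 1 - B ∘L B → S φ = 0 :=
  stmt1_general A B hA hB μ hμ φ h
end

section
/- Let U be a unitary operator and P, Q selfadjoint operators on a Hilbert space H with 0 ≤ P ≤ 1 and 0 ≤ Q ≤ 1. Set V = P U Q. If μ ∈ ℂ with |μ| = 1 and ψ ∈ H \ {0} satisfies V ψ = μ ψ, then U ψ = μ ψ, P ψ = ψ, and Q ψ = ψ. -/
/-!
An operator `0 ≤ A ≤ 1` satisfies `‖x - A x‖² + ‖A x‖² ≤ ‖x‖²`, so it is a contraction which fixes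
every vector whose norm it preserves. Since `|μ| = 1` and `U` is isometric, the chain
`‖ψ‖ = ‖P U Q ψ‖ ≤ ‖U Q ψ‖ = ‖Q ψ‖ ≤ ‖ψ‖` is a chain of equalities, so `Q ψ = ψ` and `P (U ψ) = U ψ`;
then `U ψ = P U Q ψ = μ ψ`, and `P (μ ψ) = μ ψ` gives `P ψ = ψ`.
-/

open ContinuousLinearMap
open scoped InnerProductSpace

namespace ContinuousLinearMap

variable {𝕜 E : Type*} [RCLike 𝕜] [NormedAddCommGroup E] [InnerProductSpace 𝕜 E]
  {A : E →L[𝕜] E}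

open RCLike in
theorem IsPositive.norm_apply_sq_le_re_inner (hA : A.IsPositive) (hA1 : (1 - A).IsPositive)
    (x : E) : ‖A x‖ ^ 2 ≤ re ⟪A x, x⟫_𝕜 := by
  -- `A - A² = A (1 - A) A + (1 - A) A (1 - A)`
  have h1 := hA1.re_inner_nonneg_left (A x)
  have h2 := hA.re_inner_nonneg_left (x - A x)
  have hsymm : ⟪A (A x), x⟫_𝕜 = ⟪A x, A x⟫_𝕜 := hA.isSymmetric (A x) x
  simp only [sub_apply, one_apply_eq_self, map_sub, inner_sub_left, inner_sub_right,
    hsymm] at h1 h2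
  rw [← inner_self_eq_norm_sq (𝕜 := 𝕜)]
  linarith

theorem IsPositive.norm_sub_apply_sq_add_norm_apply_sq_le (hA : A.IsPositive)
    (hA1 : (1 - A).IsPositive) (x : E) : ‖x - A x‖ ^ 2 + ‖A x‖ ^ 2 ≤ ‖x‖ ^ 2 := by
  rw [norm_sub_sq (𝕜 := 𝕜), inner_re_symm]
  linarith [hA.norm_apply_sq_le_re_inner hA1 x]

theorem IsPositive.norm_apply_le (hA : A.IsPositive) (hA1 : (1 - A).IsPositive) (x : E) :
    ‖A x‖ ≤ ‖x‖ := by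
  refine le_of_pow_le_pow_left₀ two_ne_zero (norm_nonneg x) ?_
  linarith [hA.norm_sub_apply_sq_add_norm_apply_sq_le hA1 x, sq_nonneg ‖x - A x‖]

theorem IsPositive.apply_eq_self_of_norm_apply_eq (hA : A.IsPositive)
    (hA1 : (1 - A).IsPositive) {x : E} (hx : ‖A x‖ = ‖x‖) : A x = x := by
  have := hA.norm_sub_apply_sq_add_norm_apply_sq_le hA1 x
  rw [hx] at this
  have : ‖x - A x‖ = 0 := by nlinarith [norm_nonneg (x - A x)]
  exact (sub_eq_zero.mp (norm_eq_zero.mp this)).symm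

end ContinuousLinearMap

theorem stmt2_general {H : Type*} [NormedAddCommGroup H] [InnerProductSpace ℂ H] [CompleteSpace H]
    (U P Q : H →L[ℂ] H) (hU : U ∈ unitary (H →L[ℂ] H))
    (hP0 : P.IsPositive) (hP1 : (1 - P).IsPositive)
    (hQ0 : Q.IsPositive) (hQ1 : (1 - Q).IsPositive)
    (μ : ℂ) (hμ : ‖μ‖ = 1) (ψ : H)
    (h : (P * U * Q) ψ = μ • ψ) :
    U ψ = μ • ψ ∧ P ψ = ψ ∧ Q ψ = ψ := by
  have hPUQ : P (U (Q ψ)) = μ • ψ := h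
  have hμψ : ‖μ • ψ‖ = ‖ψ‖ := by rw [norm_smul, hμ, one_mul]
  have hQψ : Q ψ = ψ := by
    refine hQ0.apply_eq_self_of_norm_apply_eq hQ1 (le_antisymm (hQ0.norm_apply_le hQ1 ψ) ?_)
    calc ‖ψ‖ = ‖P (U (Q ψ))‖ := by rw [hPUQ, hμψ]
      _ ≤ ‖U (Q ψ)‖ := hP0.norm_apply_le hP1 _
      _ = ‖Q ψ‖ := norm_map_of_mem_unitary hU _
  rw [hQψ] at hPUQ
  have hPUψ : P (U ψ) = U ψ := hP0.apply_eq_self_of_norm_apply_eq hP1 <| by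
    rw [hPUQ, hμψ, norm_map_of_mem_unitary hU]
  have hUψ : U ψ = μ • ψ := hPUψ.symm.trans hPUQ
  have hμ0 : μ ≠ 0 := by rintro rfl; simp at hμ
  refine ⟨hUψ, smul_right_injective H hμ0 ?_, hQψ⟩
  change μ • P ψ = μ • ψ
  rw [← map_smul, ← hUψ, hPUψ]

theorem stmt2 {H : Type*} [NormedAddCommGroup H] [InnerProductSpace ℂ H] [CompleteSpace H]
    (U P Q : H →L[ℂ] H) (hU : U ∈ unitary (H →L[ℂ] H))
    (hP : IsSelfAdjoint P) (hQ : IsSelfAdjoint Q)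
    (hP0 : P.IsPositive) (hP1 : (1 - P).IsPositive)
    (hQ0 : Q.IsPositive) (hQ1 : (1 - Q).IsPositive)
    (μ : ℂ) (hμ : ‖μ‖ = 1) (ψ : H) (hψ : ψ ≠ 0)
    (h : (P * U * Q) ψ = μ • ψ) :
    U ψ = μ • ψ ∧ P ψ = ψ ∧ Q ψ = ψ :=
  stmt2_general U P Q hU hP0 hP1 hQ0 hQ1 μ hμ ψ h
end

section
/- Let V be a contraction on a Hilbert space H (‖V‖ ≤ 1). For every z in the open unit disk, the operator 1 - z V* is boundedly invertible and satisfies the identity 2 Re((1 - zV*)⁻¹) - 1 = (1 - zV*)⁻¹ (1 - |z|² V* V^{**}) ((1 - zV*)⁻¹)*, where Re(T) := (T + T*)/2. In particular 2 Re((1 - zV*)⁻¹) - 1 ≥ 0. -/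
open ContinuousLinearMap

/-!
Write `A = 1 - z V*` and `G = A⁻¹` (a Neumann series, as `‖z V*‖ < 1`). In any star ring, `G A = 1`
alone gives `G + G* - 1 = G (A* + A - A A*) G*`, and for this `A` the middle factor expands to
`1 - |z|² V* V`. Positivity then comes from the C*-inequality `V* V ≤ ‖V‖² ≤ 1` and the fact that
conjugation `X ↦ G X G*` preserves positivity.
-/

theorem isUnit_one_sub_smul_of_norm_le_one {𝕜 A : Type*} [NormedField 𝕜] [NormedRing A]
    [NormedAlgebra 𝕜 A] [CompleteSpace A] {a : A} (ha : ‖a‖ ≤ 1) {z : 𝕜} (hz : ‖z‖ < 1) :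
    IsUnit (1 - z • a) :=
  isUnit_one_sub_of_norm_lt_one <| calc
    ‖z • a‖ ≤ ‖z‖ * ‖a‖ := norm_smul_le z a
    _ ≤ ‖z‖ := mul_le_of_le_one_right (norm_nonneg z) ha
    _ < 1 := hz

theorem add_star_sub_one_of_mul_eq_one {R : Type*} [Ring R] [StarRing R] {a g : R}
    (h : g * a = 1) : g + star g - 1 = g * (star a + a - a * star a) * star g := by
  have h' : star a * star g = 1 := by rw [← star_mul, h, star_one]
  calc g + star g - 1 = g * (star a * star g) + g * a * star g - g * a * (star a * star g) := by
        rw [h, h', mul_one, one_mul, one_mul]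
    _ = g * (star a + a - a * star a) * star g := by noncomm_ring

theorem star_one_sub_smul_add_sub_mul_star {𝕜 R : Type*} [RCLike 𝕜] [Ring R] [StarRing R]
    [Algebra 𝕜 R] [StarModule 𝕜 R] (z : 𝕜) (a : R) :
    star (1 - z • a) + (1 - z • a) - (1 - z • a) * star (1 - z • a)
      = 1 - ((‖z‖ ^ 2 : ℝ) : 𝕜) • (a * star a) := by
  rw [RCLike.ofReal_pow, ← RCLike.mul_conj]
  simp only [star_sub, star_one, star_smul, RCLike.star_def, sub_mul, mul_sub, one_mul, mul_one,
    smul_mul_smul_comm]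
  abel

theorem one_sub_smul_star_mul_self_nonneg {A : Type*} [CStarAlgebra A] [PartialOrder A]
    [StarOrderedRing A] {a : A} (ha : ‖a‖ ≤ 1) {r : ℝ} (hr₀ : 0 ≤ r) (hr₁ : r ≤ 1) :
    0 ≤ 1 - (r : ℂ) • (star a * a) := by
  rw [Complex.coe_smul, sub_nonneg]
  calc r • (star a * a) ≤ r • algebraMap ℝ A (‖a‖ ^ 2) :=
        smul_le_smul_of_nonneg_left CStarAlgebra.star_mul_le_algebraMap_norm_sq hr₀
    _ ≤ 1 := by
        rw [Algebra.smul_def, ← map_mul, ← map_one (algebraMap ℝ A)]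
        exact algebraMap_mono A (mul_le_one₀ hr₁ (sq_nonneg _) (pow_le_one₀ (norm_nonneg a) ha))

theorem stmt3 {H : Type*} [NormedAddCommGroup H] [InnerProductSpace ℂ H] [CompleteSpace H]
    (V : H →L[ℂ] H) (hV : ‖V‖ ≤ 1) (z : ℂ) (hz : ‖z‖ < 1) :
    IsUnit (1 - z • adjoint V) ∧
    (∀ G : H →L[ℂ] H, G = Ring.inverse (1 - z • adjoint V) →
      (G + adjoint G - 1
          = G * (1 - ((‖z‖ ^ 2 : ℝ) : ℂ) • (adjoint V * V)) * adjoint G)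
      ∧ (G + adjoint G - 1).IsPositive) := by
  have hunit : IsUnit (1 - z • adjoint V) :=
    isUnit_one_sub_smul_of_norm_le_one (by rwa [adjoint.norm_map]) hz
  refine ⟨hunit, fun G hG => ?_⟩
  have hGA : G * (1 - z • adjoint V) = 1 := hG ▸ Ring.inverse_mul_cancel _ hunit
  have key : G + adjoint G - 1 = G * (1 - ((‖z‖ ^ 2 : ℝ) : ℂ) • (adjoint V * V)) * adjoint G := by
    have := add_star_sub_one_of_mul_eq_one hGA
    rwa [star_one_sub_smul_add_sub_mul_star, star_eq_adjoint, star_eq_adjoint,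
      adjoint_adjoint] at this
  refine ⟨key, ?_⟩
  have hz₂ : ‖z‖ ^ 2 ≤ 1 := pow_le_one₀ (norm_nonneg z) hz.le
  have := star_right_conjugate_nonneg
    (one_sub_smul_star_mul_self_nonneg hV (sq_nonneg ‖z‖) hz₂) G
  rwa [star_eq_adjoint, star_eq_adjoint, ← key, nonneg_iff_isPositive] at this
end

section
/- Let B be a bounded selfadjoint operator and E an orthogonal projection on a Hilbert space H, with E⊥ := 1 - E. If there exists c > 0 with E B E ≥ c E, then for every p > 0 with c - p‖B‖ > 0, one has B ≥ (c - p‖B‖) E - ‖B‖(1 + p⁻¹) E⊥. Conversely, if B ≥ a E - b E⊥ for some a > 0, b > 0, then E B E ≥ a E. -/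
/-!
Write `x = E x + (1 - E) x`. Then `re ⟪B x, x⟫` splits into `re ⟪B (E x), E x⟫ ≥ c ‖E x‖²`,
twice the cross term `re ⟪B (E x), (1 - E) x⟫ ≥ -‖B‖ ‖E x‖ ‖(1 - E) x‖`, which AM–GM bounds by
`-(‖B‖ / 2) (p ‖E x‖² + p⁻¹ ‖(1 - E) x‖²)`, and `re ⟪B ((1 - E) x), (1 - E) x⟫ ≥ -‖B‖ ‖(1 - E) x‖²`.
Conversely, testing `B ≥ a E - b (1 - E)` on vectors in the range of `E` kills the `b` term.
-/

open ContinuousLinearMap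

namespace ContinuousLinearMap

open scoped InnerProductSpace

variable {𝕜 H : Type*} [RCLike 𝕜] [NormedAddCommGroup H] [InnerProductSpace 𝕜 H]

lemma re_inner_map_add_self {B : H →L[𝕜] H} (hB : (B : H →ₗ[𝕜] H).IsSymmetric) (u v : H) :
    RCLike.re ⟪B (u + v), u + v⟫_𝕜 =
      RCLike.re ⟪B u, u⟫_𝕜 + 2 * RCLike.re ⟪B u, v⟫_𝕜 + RCLike.re ⟪B v, v⟫_𝕜 := by
  have hvu : RCLike.re ⟪B v, u⟫_𝕜 = RCLike.re ⟪B u, v⟫_𝕜 := by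
    rw [← inner_conj_symm, RCLike.conj_re]; exact congrArg RCLike.re (hB u v).symm
  simp only [map_add, inner_add_left, inner_add_right, hvu]
  ring

lemma neg_opNorm_mul_le_re_inner (B : H →L[𝕜] H) (u v : H) :
    -(‖B‖ * ‖u‖ * ‖v‖) ≤ RCLike.re ⟪B u, v⟫_𝕜 := by
  have h := re_inner_le_norm (𝕜 := 𝕜) (-B u) v
  rw [inner_neg_left, map_neg, norm_neg] at h
  nlinarith [B.le_opNorm u, norm_nonneg v]

lemma re_inner_apply_self_eq_norm_sq [CompleteSpace H] {P : H →L[𝕜] H}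
    (hP : IsStarProjection P) (x : H) : RCLike.re ⟪P x, x⟫_𝕜 = ‖P x‖ ^ 2 := by
  have hPx : ⟪P x, x⟫_𝕜 = ⟪P x, P x⟫_𝕜 := by
    conv_lhs => rw [← hP.isIdempotentElem.eq, mul_apply_eq_comp]
    exact hP.isSelfAdjoint.isSymmetric _ _
  rw [hPx, inner_self_eq_norm_sq]

lemma le_re_inner_map_add_self {B : H →L[𝕜] H} (hB : (B : H →ₗ[𝕜] H).IsSymmetric)
    {c p : ℝ} (hp : 0 < p) {u : H} (v : H) (hu : c * ‖u‖ ^ 2 ≤ RCLike.re ⟪B u, u⟫_𝕜) :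
    (c - p * ‖B‖) * ‖u‖ ^ 2 - ‖B‖ * (1 + p⁻¹) * ‖v‖ ^ 2 ≤ RCLike.re ⟪B (u + v), u + v⟫_𝕜 := by
  have hcross := neg_opNorm_mul_le_re_inner B u v
  have hdiag := neg_opNorm_mul_le_re_inner B v v
  have amgm : 2 * ‖u‖ * ‖v‖ ≤ p * ‖u‖ ^ 2 + p⁻¹ * ‖v‖ ^ 2 := by
    have := mul_nonneg (inv_pos.2 hp).le (sq_nonneg (p * ‖u‖ - ‖v‖))
    field_simp at this ⊢
    nlinarith
  rw [re_inner_map_add_self hB]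
  nlinarith [mul_le_mul_of_nonneg_left amgm (norm_nonneg B)]

lemma isPositive_sub_smul_sub_smul_iff [CompleteSpace H] {B E F : H →L[𝕜] H}
    (hB : IsSelfAdjoint B) (hE : IsStarProjection E) (hF : IsStarProjection F) (a b : ℝ) :
    (B - ((a : 𝕜) • E - (b : 𝕜) • F)).IsPositive ↔
      ∀ x, a * ‖E x‖ ^ 2 - b * ‖F x‖ ^ 2 ≤ RCLike.re ⟪B x, x⟫_𝕜 := by
  have hsa : IsSelfAdjoint (B - ((a : 𝕜) • E - (b : 𝕜) • F)) :=
    hB.sub ((IsSelfAdjoint.smul (RCLike.conj_ofReal a) hE.isSelfAdjoint).sub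
      (IsSelfAdjoint.smul (RCLike.conj_ofReal b) hF.isSelfAdjoint))
  simp only [isPositive_def', hsa, true_and, reApplyInnerSelf_apply, sub_apply, smul_apply,
    inner_sub_left, inner_smul_left, RCLike.conj_ofReal, map_sub, RCLike.re_ofReal_mul,
    re_inner_apply_self_eq_norm_sq hE, re_inner_apply_self_eq_norm_sq hF, sub_nonneg]

lemma isPositive_mul_mul_sub_smul_iff [CompleteSpace H] {B E : H →L[𝕜] H}
    (hB : IsSelfAdjoint B) (hE : IsStarProjection E) (c : ℝ) :
    (E * B * E - (c : 𝕜) • E).IsPositive ↔ ∀ x, c * ‖E x‖ ^ 2 ≤ RCLike.re ⟪B (E x), E x⟫_𝕜 := by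
  have hsa : IsSelfAdjoint (E * B * E - (c : 𝕜) • E) := by
    refine .sub ?_ (IsSelfAdjoint.smul (RCLike.conj_ofReal c) hE.isSelfAdjoint)
    simpa only [hE.isSelfAdjoint.star_eq] using hB.conjugate E
  simp only [isPositive_def', hsa, true_and, reApplyInnerSelf_apply, sub_apply, smul_apply,
    mul_apply_eq_comp, inner_sub_left, inner_smul_left, RCLike.conj_ofReal, map_sub,
    RCLike.re_ofReal_mul, re_inner_apply_self_eq_norm_sq hE, sub_nonneg]
  refine forall_congr' fun x => ?_
  have hEx : ⟪E (B (E x)), x⟫_𝕜 = ⟪B (E x), E x⟫_𝕜 := hE.isSelfAdjoint.isSymmetric _ _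
  rw [hEx]

end ContinuousLinearMap

theorem stmt5 {H : Type*} [NormedAddCommGroup H] [InnerProductSpace ℂ H] [CompleteSpace H]
    (B E : H →L[ℂ] H) (hB : IsSelfAdjoint B)
    (hE : IsIdempotentElem E) (hEsa : IsSelfAdjoint E) :
    (∀ c : ℝ, 0 < c → (E * B * E - (c : ℂ) • E).IsPositive →
      ∀ p : ℝ, 0 < p → 0 < c - p * ‖B‖ →
        (B - (((c - p * ‖B‖ : ℝ) : ℂ) • E
            - ((‖B‖ * (1 + p⁻¹) : ℝ) : ℂ) • (1 - E))).IsPositive) ∧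
    (∀ a b : ℝ, 0 < a → 0 < b →
      (B - ((a : ℂ) • E - (b : ℂ) • (1 - E))).IsPositive →
      (E * B * E - (a : ℂ) • E).IsPositive) := by
  have hP : IsStarProjection E := ⟨hE, hEsa⟩
  refine ⟨fun c _ hc p hp _ => ?_, fun a b _ _ h => ?_⟩
  · refine (isPositive_sub_smul_sub_smul_iff hB hP hP.one_sub _ _).2 fun x => ?_
    have hx : E x + (1 - E) x = x := by simp
    have key := le_re_inner_map_add_self hB.isSymmetric hp ((1 - E) x)
      ((isPositive_mul_mul_sub_smul_iff hB hP c).1 hc x)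
    rwa [hx] at key
  · refine (isPositive_mul_mul_sub_smul_iff hB hP a).2 fun x => ?_
    have hEx : E (E x) = E x := by rw [← mul_apply_eq_comp, hE.eq]
    simpa [hEx] using (isPositive_sub_smul_sub_smul_iff hB hP hP.one_sub a b).1 h (E x)
end

section
/- Let U be a unitary operator and P an orthogonal projection on a Hilbert space H, with P⊥ := 1 - P. Set R := U P U* P. Then 2 Re(1 - R) - (3/2)|1 - R|² = (1/2) |P⊥ - U P⊥ U* P|², where |T|² := T*T and Re(T) := (T + T*)/2. In particular 2 Re(1 - R) - (3/2)|1 - R|² ≥ 0. -/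
/-!
With `Q = U P U*` (again a projection) we have `R = Q P`, and the identity is a purely algebraic
consequence of `P² = P`, `Q² = Q` and self-adjointness: both sides expand to
`(1 + QP + PQ - 3 PQP) / 2`. Positivity is then that of `S* S`.
-/

open ContinuousLinearMap

theorem IsStarProjection.conj_of_mem_unitary {R : Type*} [Monoid R] [StarMul R] {p u : R}
    (hp : IsStarProjection p) (hu : u ∈ unitary R) : IsStarProjection (u * p * star u) where
  isIdempotentElem := by
    rw [IsIdempotentElem]
    calc u * p * star u * (u * p * star u) = u * p * (star u * u) * p * star u := by noncomm_ring
      _ = u * p * star u := by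
        rw [Unitary.star_mul_self_of_mem hu, mul_one, mul_assoc u, hp.isIdempotentElem.eq]
  isSelfAdjoint := by
    rw [IsSelfAdjoint, star_mul, star_mul, star_star, hp.isSelfAdjoint.star_eq, mul_assoc]

theorem IsStarProjection.star_mul_self_sub_mul_eq {R : Type*} [Ring R] [StarRing R] {p q : R}
    (hp : IsStarProjection p) (hq : IsStarProjection q) :
    star ((1 - p) - (1 - q) * p) * ((1 - p) - (1 - q) * p)
      = 2 • ((1 - q * p) + star (1 - q * p)) - 3 • (star (1 - q * p) * (1 - q * p)) := by
  have hpp : p * p = p := hp.isIdempotentElem.eq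
  have hqq (x : R) : q * (q * x) = q * x := by rw [← mul_assoc, hq.isIdempotentElem.eq]
  simp only [star_sub, star_mul, star_one, hp.isSelfAdjoint.star_eq, hq.isSelfAdjoint.star_eq,
    mul_sub, sub_mul, mul_one, one_mul, mul_assoc, hpp, hqq]
  abel

theorem IsStarProjection.add_star_sub_smul_star_mul_self_eq {A : Type*} [Ring A] [StarRing A]
    [Module ℂ A] {p q : A} (hp : IsStarProjection p) (hq : IsStarProjection q) :
    ((1 - q * p) + star (1 - q * p)) - (3 / 2 : ℂ) • (star (1 - q * p) * (1 - q * p))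
      = (1 / 2 : ℂ) • (star ((1 - p) - (1 - q) * p) * ((1 - p) - (1 - q) * p)) := by
  rw [hp.star_mul_self_sub_mul_eq hq]
  module

theorem stmt7 {H : Type*} [NormedAddCommGroup H] [InnerProductSpace ℂ H] [CompleteSpace H]
    (U P : H →L[ℂ] H) (hU : U ∈ unitary (H →L[ℂ] H))
    (hP : IsIdempotentElem P) (hPsa : IsSelfAdjoint P) :
    ∀ R S : H →L[ℂ] H,
      R = U * P * adjoint U * P →
      S = (1 - P) - U * (1 - P) * adjoint U * P →
      (((1 - R) + adjoint (1 - R)) - (3 / 2 : ℂ) • (adjoint (1 - R) * (1 - R))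
          = (1 / 2 : ℂ) • (adjoint S * S))
      ∧ (((1 - R) + adjoint (1 - R))
          - (3 / 2 : ℂ) • (adjoint (1 - R) * (1 - R))).IsPositive := by
  intro R S hR hS
  have hPproj : IsStarProjection P := ⟨hP, hPsa⟩
  have hQproj : IsStarProjection (U * P * star U) := hPproj.conj_of_mem_unitary hU
  have hSQ : S = (1 - P) - (1 - U * P * star U) * P := by
    rw [hS, ← star_eq_adjoint, mul_sub, sub_mul, mul_one, Unitary.mul_star_self_of_mem hU]
  have key : ((1 - R) + adjoint (1 - R)) - (3 / 2 : ℂ) • (adjoint (1 - R) * (1 - R))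
      = (1 / 2 : ℂ) • (adjoint S * S) := by
    rw [hSQ, hR, ← star_eq_adjoint]
    exact hPproj.add_star_sub_smul_star_mul_self_eq hQproj
  refine ⟨key, ?_⟩
  rw [key]
  exact (isPositive_adjoint_comp_self S).smul_of_nonneg (by simp [Complex.nonneg_iff])
end
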